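/- arXiv:2511.21481 — 5 statements merged into one kernel-verified Lean document; each statement's English description precedes it below -/
import Mathlib

section
/- Let X be a linear order and let σ, τ be elements of X^ω with τ ≤_{X^ω} σ. Writing σ = ⟨(b_0,a_0),…,(b_m,a_m)⟩ and writing m_τ + 1 for the number of pairs of τ, one has m_τ ≤ b_0; in particular the length of τ satisfies |τ| ≤ 2·b_0 + 2. (Consequently, if σ = (σ_i)_{i≥0} is an infinite <_{X^ω}-descending sequence and k_σ denotes the first natural-number exponent of σ_0, then |σ_i| ≤ 2·k_σ + 2 for every i ≥ 0.) -/
/-- `l` represents an element of `X^ω`: a finite sequence of pairs `(b_t, a_t)` with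
strictly decreasing natural-number exponents `b_0 > b_1 > … > b_m`. -/
def IsExpSeq {X : Type*} (l : List (ℕ × X)) : Prop :=
  l.Chain' (fun p q => q.1 < p.1)

/-- The `s`-th component of `τ`: at even positions `2t` the exponent `b_t` (in `ℕ`),
at odd positions `2t+1` the coefficient `a_t` (in `X`); `none` if undefined. -/
def comp {X : Type*} (l : List (ℕ × X)) (s : ℕ) : Option (ℕ ⊕ X) :=
  if s % 2 = 0 then (l[s / 2]?).map (fun p => Sum.inl p.1)
  else (l[s / 2]?).map (fun p => Sum.inr p.2)

/-- The order on `X^ω`: `τ <_{X^ω} σ` iff `τ` is a proper initial segment of `σ`, or at the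
least index `s` where both components are defined and differ, the component of `τ` is smaller
(comparing even positions in `ℕ` and odd positions in `X`). -/
def XOmegaLt {X : Type*} [LinearOrder X] (τ σ : List (ℕ × X)) : Prop :=
  (τ <+: σ ∧ τ ≠ σ) ∨
  ∃ s, (∀ r, r < s → comp τ r = comp σ r) ∧
    ∃ a b, comp τ s = some a ∧ comp σ s = some b ∧ Sum.Lex (· < ·) (· < ·) a b

/-!
Exponents strictly decrease along an element of `X^ω`, so a sequence with first exponent `b`
has at most `b + 1` pairs. Comparing `τ ≤ σ` starts at position `0`, the first exponent, so the
first exponent of `τ` is at most that of `σ`; along a descending sequence the first exponents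
therefore never exceed `k_σ`.
-/

lemma List.exists_eq_cons_of_getElem?_zero_eq_some {α : Type*} {l : List α} {a : α}
    (h : l[0]? = some a) : ∃ t, l = a :: t := by
  cases l <;> simp_all

section ExpSeq

variable {X : Type*}

lemma comp_cons_zero (p : ℕ × X) (l : List (ℕ × X)) : comp (p :: l) 0 = some (Sum.inl p.1) := by
  simp [comp]

lemma IsExpSeq.length_le {p : ℕ × X} {l : List (ℕ × X)} (h : IsExpSeq (p :: l)) :
    l.length ≤ p.1 := by
  induction l generalizing p with
  | nil => simp
  | cons q l ih =>
    rw [IsExpSeq, List.Chain', List.isChain_cons_cons] at h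
    have := ih h.2
    simp only [List.length_cons]
    omega

section Order

variable [LinearOrder X]

lemma XOmegaLt.ne_nil_right {τ σ : List (ℕ × X)} (h : XOmegaLt τ σ) : σ ≠ [] := by
  rintro rfl
  rcases h with ⟨hpre, hne⟩ | ⟨_, -, _, _, -, hσ, -⟩
  · exact hne (List.prefix_nil.mp hpre)
  · simp [comp] at hσ

lemma XOmegaLt.head_fst_le {p q : ℕ × X} {τ σ : List (ℕ × X)}
    (h : XOmegaLt (p :: τ) (q :: σ)) : p.1 ≤ q.1 := by
  rcases h with ⟨hpre, -⟩ | ⟨_ | s, hagree, a, b, ha, hb, hab⟩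
  · exact (List.cons_prefix_cons.mp hpre).1 ▸ le_rfl
  · rw [comp_cons_zero, Option.some_inj] at ha hb
    subst ha hb
    exact (Sum.lex_inl_inl.mp hab).le
  · have h0 := hagree 0 s.succ_pos
    simp only [comp_cons_zero, Option.some_inj, Sum.inl.injEq] at h0
    exact h0.le

theorem length_le_of_le {τ σ : List (ℕ × X)} (hτ : IsExpSeq τ) (hle : XOmegaLt τ σ ∨ τ = σ)
    {b a} (hhead : σ[0]? = some (b, a)) : τ.length ≤ b + 1 := by
  obtain ⟨σ, rfl⟩ : ∃ σ', σ = (b, a) :: σ' := List.exists_eq_cons_of_getElem?_zero_eq_some hhead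
  cases τ with
  | nil => simp
  | cons p τ =>
    have hp : p.1 ≤ b := by
      rcases hle with hlt | heq
      · exact hlt.head_fst_le
      · exact (List.cons.inj heq).1 ▸ le_rfl
    have := hτ.length_le
    simp only [List.length_cons]
    omega

theorem exists_head_fst_le_of_descending {σs : ℕ → List (ℕ × X)}
    (hdesc : ∀ i, XOmegaLt (σs (i + 1)) (σs i)) {k a} (hk : (σs 0)[0]? = some (k, a)) (i : ℕ) :
    ∃ b a', (σs i)[0]? = some (b, a') ∧ b ≤ k := by
  induction i with
  | zero => exact ⟨k, a, hk, le_rfl⟩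
  | succ n ih =>
    obtain ⟨b, a', hb, hbk⟩ := ih
    obtain ⟨σ, hσ⟩ : ∃ σ', σs n = (b, a') :: σ' := List.exists_eq_cons_of_getElem?_zero_eq_some hb
    obtain ⟨p, τ, hτ⟩ := List.exists_cons_of_ne_nil (hdesc (n + 1)).ne_nil_right
    have hp : p.1 ≤ b := by
      have := hdesc n
      rw [hσ, hτ] at this
      exact this.head_fst_le
    exact ⟨p.1, p.2, by simp [hτ], hp.trans hbk⟩

end Order

end ExpSeq

theorem stmt_0_general {X : Type*} [LinearOrder X] (σ τ : List (ℕ × X))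
    (hτ : IsExpSeq τ)
    (hle : XOmegaLt τ σ ∨ τ = σ)
    (b0 : ℕ) (a0 : X) (hhead : σ[0]? = some (b0, a0)) :
    (τ.length ≤ b0 + 1 ∧ 2 * τ.length ≤ 2 * b0 + 2) ∧
    ∀ σs : ℕ → List (ℕ × X), (∀ i, IsExpSeq (σs i)) →
      (∀ i, XOmegaLt (σs (i + 1)) (σs i)) →
      ∀ kσ a, (σs 0)[0]? = some (kσ, a) → ∀ i, 2 * (σs i).length ≤ 2 * kσ + 2 := by
  have hlen := length_le_of_le hτ hle hhead
  refine ⟨⟨hlen, by omega⟩, fun σs hseq hdesc kσ a hk i => ?_⟩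
  obtain ⟨b, a', hb, hbk⟩ := exists_head_fst_le_of_descending hdesc hk i
  have := length_le_of_le (hseq i) (Or.inr rfl) hb
  omega

/-- if `τ ≤_{X^ω} σ` and `σ = ⟨(b_0,a_0),…⟩`, then the number of pairs of `τ`
is at most `b_0 + 1` (i.e. `m_τ ≤ b_0`), hence `|τ| ≤ 2·b_0 + 2`; consequently every term of an
infinite `<_{X^ω}`-descending sequence has length at most `2·k_σ + 2`, where `k_σ` is the first
exponent of the first term. -/
theorem stmt_0 {X : Type*} [LinearOrder X] (σ τ : List (ℕ × X))
    (hσ : IsExpSeq σ) (hτ : IsExpSeq τ)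
    (hle : XOmegaLt τ σ ∨ τ = σ)
    (b0 : ℕ) (a0 : X) (hhead : σ[0]? = some (b0, a0)) :
    (τ.length ≤ b0 + 1 ∧ 2 * τ.length ≤ 2 * b0 + 2) ∧
    ∀ σs : ℕ → List (ℕ × X), (∀ i, IsExpSeq (σs i)) →
      (∀ i, XOmegaLt (σs (i + 1)) (σs i)) →
      ∀ kσ a, (σs 0)[0]? = some (kσ, a) → ∀ i, 2 * (σs i).length ≤ 2 * kσ + 2 :=
  stmt_0_general σ τ hτ hle b0 a0 hhead
end

section
/- Let X be a linear order and let σ = (σ_i)_{i≥0} be an infinite <_{X^ω}-descending sequence. For i < j define c(i,j) := |σ_j| if σ_j is a proper initial segment of σ_i, and otherwise c(i,j) := the least s such that σ_i(s) ≠ σ_j(s). Then for all natural numbers i < j < k one has c(i,k) ≤ c(i,j); that is, c is a right-ordered colouring of pairs of natural numbers with values in the finite set {0,…,2k_σ+1} (where k_σ is the first exponent of σ_0) equipped with the reverse of the natural order. -/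
-- The first-difference colouring `c(i,j)` associated to a sequence `σ`:
-- `c(i,j) = |σ_j|` if `σ_j` is a proper initial segment of `σ_i`, and otherwise
-- the least `s` with `σ_i(s) ≠ σ_j(s)`.
open Classical in
noncomputable def firstDiff {X : Type*} (σs : ℕ → List (ℕ × X)) (i j : ℕ) : ℕ :=
  if σs j <+: σs i ∧ σs j ≠ σs i then 2 * (σs j).length
  else sInf {s | comp (σs i) s ≠ comp (σs j) s}

/-! Encoding each `σ_i` as its sequence of components, with `⊥` for an undefined one, turns
`<_{X^ω}` into the lexicographic order on sequences `ℕ → WithBot (ℕ ⊕ₗ X)` and `c(i,j)` into the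
first place where the encodings of `σ_j < σ_i` differ. First differences along a descending chain
`f < g < h` satisfy `d(f, h) = min (d(f, g)) (d(g, h))`, which gives `c(i,k) ≤ c(i,j)`. For the
bound, the component of `σ_i` at `c(i,j)` is defined, while the exponents of `σ_i` decrease strictly
from its first one, which is at most `k_σ` because first exponents decrease along the sequence. -/

section LtAt

variable {β : Type*} [Preorder β] {f g h : ℕ → β} {s s' : ℕ}

def LtAt (f g : ℕ → β) (s : ℕ) : Prop :=
  (∀ r < s, f r = g r) ∧ f s < g s

theorem LtAt.trans (hfg : LtAt f g s) (hgh : LtAt g h s') : LtAt f h (min s s') := by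
  refine ⟨fun r hr => (hfg.1 r (hr.trans_le (min_le_left _ _))).trans
    (hgh.1 r (hr.trans_le (min_le_right _ _))), ?_⟩
  rcases lt_trichotomy s s' with hlt | rfl | hgt
  · rw [min_eq_left hlt.le, ← hgh.1 s hlt]
    exact hfg.2
  · rw [min_self]
    exact hfg.2.trans hgh.2
  · rw [min_eq_right hgt.le, hfg.1 s' hgt]
    exact hgh.2

theorem LtAt.apply_zero_le (hfg : LtAt f g s) : f 0 ≤ g 0 := by
  rcases Nat.eq_zero_or_pos s with rfl | hs
  · exact hfg.2.le
  · exact (hfg.1 0 hs).le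

theorem LtAt.sInf_ne_eq (hfg : LtAt f g s) : sInf {r | g r ≠ f r} = s := by
  refine le_antisymm (Nat.sInf_le hfg.2.ne') (le_csInf ⟨s, hfg.2.ne'⟩ fun r hr => ?_)
  by_contra! hrs
  exact hr (hfg.1 r hrs).symm

theorem LtAt.unique (h₁ : LtAt f g s) (h₂ : LtAt f g s') : s = s' :=
  h₁.sInf_ne_eq.symm.trans h₂.sInf_ne_eq

end LtAt

section XOmega

variable {X : Type*}

/-- An undefined component is `⊥`, so that the proper-prefix clause of `XOmegaLt` becomes an
ordinary first difference. -/
def compLex (l : List (ℕ × X)) (s : ℕ) : WithBot (ℕ ⊕ₗ X) :=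
  (comp l s).elim ⊥ fun a => ↑(toLex a)

theorem compLex_ne_compLex_iff {l l' : List (ℕ × X)} {s : ℕ} :
    compLex l s ≠ compLex l' s ↔ comp l s ≠ comp l' s := by
  unfold compLex
  cases comp l s <;> cases comp l' s <;> simp

theorem compLex_eq_bot_iff {l : List (ℕ × X)} {s : ℕ} : compLex l s = ⊥ ↔ l.length ≤ s / 2 := by
  unfold compLex comp
  split_ifs <;> cases h : l[s / 2]? <;> simp_all [List.getElem?_eq_some_iff] <;> exact h.1

theorem compLex_zero {l : List (ℕ × X)} {p : ℕ × X} (hp : l[0]? = some p) :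
    compLex l 0 = ↑(toLex (Sum.inl p.1 : ℕ ⊕ X)) := by
  simp [compLex, comp, hp]

theorem ltAt_compLex_of_prefix [Preorder X] {τ σ : List (ℕ × X)} (hpre : τ <+: σ) (hne : τ ≠ σ) :
    LtAt (compLex τ) (compLex σ) (2 * τ.length) := by
  have hlen : τ.length < σ.length := hpre.length_le.lt_of_ne fun h => hne (hpre.eq_of_length h)
  refine ⟨fun r hr => ?_, ?_⟩
  · have hr2 : r / 2 < τ.length := by omega
    simp only [compLex, comp, List.getElem?_eq_getElem hr2, List.prefix_iff_getElem?.mp hpre _ hr2]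
  · rw [compLex_eq_bot_iff.mpr (by omega), WithBot.bot_lt_iff_ne_bot, Ne, compLex_eq_bot_iff]
    omega

theorem XOmegaLt.exists_ltAt [LinearOrder X] {τ σ : List (ℕ × X)} (h : XOmegaLt τ σ) :
    ∃ s, LtAt (compLex τ) (compLex σ) s := by
  rcases h with ⟨hpre, hne⟩ | ⟨s, hagree, a, b, ha, hb, hab⟩
  · exact ⟨_, ltAt_compLex_of_prefix hpre hne⟩
  · refine ⟨s, fun r hr => by simp only [compLex, hagree r hr], ?_⟩
    simpa [compLex, ha, hb] using Sum.Lex.toLex_lt_toLex.mpr hab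

theorem firstDiff_eq_of_ltAt [Preorder X] {σs : ℕ → List (ℕ × X)} {i j s : ℕ}
    (h : LtAt (compLex (σs j)) (compLex (σs i)) s) : firstDiff σs i j = s := by
  unfold firstDiff
  split_ifs with hpre
  · exact (ltAt_compLex_of_prefix hpre.1 hpre.2).unique h
  · simpa only [compLex_ne_compLex_iff] using h.sInf_ne_eq

theorem IsExpSeq.getElem_fst_add_le {l : List (ℕ × X)} (hl : IsExpSeq l) :
    ∀ t (ht : t < l.length), l[t].1 + t ≤ (l[0]'(by omega)).1
  | 0, _ => le_rfl
  | t + 1, ht => by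
    have hstep := List.isChain_iff_getElem.mp hl t ht
    have := hl.getElem_fst_add_le t (by omega)
    omega

variable [LinearOrder X] {σs : ℕ → List (ℕ × X)}

theorem ltAt_compLex_of_descending (hdesc : ∀ i, XOmegaLt (σs (i + 1)) (σs i)) {i j : ℕ}
    (hij : i < j) : ∃ s, LtAt (compLex (σs j)) (compLex (σs i)) s := by
  induction j, hij using Nat.le_induction with
  | base => exact (hdesc i).exists_ltAt
  | succ j _ ih =>
    obtain ⟨s, hs⟩ := ih
    obtain ⟨s', hs'⟩ := (hdesc j).exists_ltAt
    exact ⟨_, hs'.trans hs⟩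

theorem getElem_zero_fst_le_of_descending (hdesc : ∀ i, XOmegaLt (σs (i + 1)) (σs i))
    {kσ : ℕ} {a : X} (h0 : (σs 0)[0]? = some (kσ, a)) (i : ℕ) (hi : 0 < (σs i).length) :
    ((σs i)[0]'hi).1 ≤ kσ := by
  have hhead : compLex (σs i) 0 ≤ compLex (σs 0) 0 := by
    rcases Nat.eq_zero_or_pos i with rfl | hi
    · exact le_rfl
    · obtain ⟨s, hs⟩ := ltAt_compLex_of_descending hdesc hi
      exact hs.apply_zero_le
  rwa [compLex_zero (List.getElem?_eq_getElem hi), compLex_zero h0, WithBot.coe_le_coe,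
    Sum.Lex.inl_le_inl_iff] at hhead

end XOmega

/-- for an infinite `<_{X^ω}`-descending sequence `σ`, the first-difference
colouring satisfies `c(i,k) ≤ c(i,j)` for all `i < j < k`; i.e. `c` is a right-ordered
colouring with values in `{0, …, 2·k_σ + 1}` (where `k_σ` is the first exponent of `σ_0`)
equipped with the reverse of the natural order. -/
theorem stmt_2 {X : Type*} [LinearOrder X] (σs : ℕ → List (ℕ × X))
    (hvalid : ∀ i, IsExpSeq (σs i))
    (hdesc : ∀ i, XOmegaLt (σs (i + 1)) (σs i)) :
    (∀ i j k, i < j → j < k → firstDiff σs i k ≤ firstDiff σs i j) ∧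
    ∀ kσ a, (σs 0)[0]? = some (kσ, a) →
      ∀ i j, i < j → firstDiff σs i j < 2 * kσ + 2 := by
  constructor
  · intro i j k hij hjk
    obtain ⟨s, hs⟩ := ltAt_compLex_of_descending hdesc hij
    obtain ⟨s', hs'⟩ := ltAt_compLex_of_descending hdesc hjk
    rw [firstDiff_eq_of_ltAt hs, firstDiff_eq_of_ltAt (hs'.trans hs)]
    exact min_le_right _ _
  · intro kσ a h0 i j hij
    obtain ⟨s, hs⟩ := ltAt_compLex_of_descending hdesc hij
    rw [firstDiff_eq_of_ltAt hs]
    have hlen : s / 2 < (σs i).length := by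
      simpa [compLex_eq_bot_iff] using (bot_le.trans_lt hs.2).ne'
    have hdecr := (hvalid i).getElem_fst_add_le (s / 2) hlen
    have hhead := getElem_zero_fst_le_of_descending hdesc h0 i (by omega)
    omega
end

section
/- Let X be a linear order, let σ = (σ_i)_{i≥0} be an infinite <_{X^ω}-descending sequence, and for i < j define c(i,j) := |σ_j| if σ_j is a proper initial segment of σ_i, and otherwise c(i,j) := the least s such that σ_i(s) ≠ σ_j(s). Let H = {h_0 < h_1 < h_2 < …} be an infinite subset of ℕ such that c is constant on pairs from H, with constant value c*. Then c* is odd, c* < |σ_{h_i}| for every i, and writing c* = 2t+1, the sequence i ↦ a_t^{h_i} of t-th X-coefficients of the σ_{h_i} is strictly <_X-decreasing. -/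
/-!
Transitivity of `<_{X^ω}` makes `(σ_{h_i})` pairwise descending. If `σ_{h_j}` were a proper
initial segment of `σ_{h_i}` for some `i < j`, then `c* = |σ_{h_j}|`, whereas `c* = c(j, j+1)`
is always below `|σ_{h_j}|`; so every pair from `H` first differs at position `c*`, with the
later sequence smaller there. Hence the components at position `c*` form a descending sequence
in `ℕ ⊕ X` (ordered lexicographically). Such a sequence cannot meet the well-founded summand
`ℕ`, so `c*` is an odd (coefficient) position and the coefficients decrease in `X`.
-/

theorem Acc.not_forall_rel_apply_succ {α : Type*} {r : α → α → Prop} {f : ℕ → α}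
    (h : Acc r (f 0)) : ¬ ∀ n, r (f (n + 1)) (f n) := by
  generalize hx : f 0 = x at h
  induction h generalizing f with
  | intro x _ ih =>
    intro hf
    exact ih (f 1) (hx ▸ hf 0) (f := fun n => f (n + 1)) rfl fun n => hf (n + 1)

theorem Sum.isRight_of_forall_lex_apply_succ {α β : Type*} {r : α → α → Prop}
    {s : β → β → Prop} (hr : WellFounded r) {f : ℕ → α ⊕ β}
    (hf : ∀ n, Sum.Lex r s (f (n + 1)) (f n)) (n : ℕ) : (f n).isRight := by
  cases hfn : f n with
  | inl a =>
    have hacc : Acc (Sum.Lex r s) (f (n + 0)) := hfn ▸ Sum.lex_acc_inl (hr.apply a)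
    exact absurd (fun m => hf (n + m))
      (Acc.not_forall_rel_apply_succ (f := fun m => f (n + m)) hacc)
  | inr b => rfl

section XOmega

variable {X : Type*}

theorem comp_eq_map (l : List (ℕ × X)) (s : ℕ) :
    comp l s = l[s / 2]?.map fun p => if s % 2 = 0 then Sum.inl p.1 else Sum.inr p.2 := by
  unfold comp
  split <;> simp_all

theorem comp_eq_none_iff {l : List (ℕ × X)} {s : ℕ} : comp l s = none ↔ 2 * l.length ≤ s := by
  rw [comp_eq_map, Option.map_eq_none_iff, List.getElem?_eq_none_iff]
  omega

theorem lt_two_mul_length_of_comp_eq_some {l : List (ℕ × X)} {s : ℕ} {a : ℕ ⊕ X}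
    (h : comp l s = some a) : s < 2 * l.length :=
  not_le.1 fun hle => by simp [comp_eq_none_iff.2 hle] at h

theorem exists_comp_eq_some {l : List (ℕ × X)} {s : ℕ} (h : s < 2 * l.length) :
    ∃ a, comp l s = some a :=
  Option.ne_none_iff_exists'.1 (mt comp_eq_none_iff.1 (not_le.2 h))

theorem mod_two_eq_one_of_comp_eq_inr {l : List (ℕ × X)} {s : ℕ} {x : X}
    (h : comp l s = some (Sum.inr x)) : s % 2 = 1 := by
  unfold comp at h
  split at h <;> simp at h
  omega

theorem List.IsPrefix.comp_eq {τ σ : List (ℕ × X)} (h : τ <+: σ) {r : ℕ}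
    (hr : r < 2 * τ.length) : comp τ r = comp σ r := by
  have hlt : r / 2 < τ.length := by omega
  rw [comp_eq_map, comp_eq_map, List.getElem?_eq_getElem hlt,
    List.prefix_iff_getElem?.1 h _ hlt]

theorem getElem?_eq_of_comp_eq {l l' : List (ℕ × X)} {k : ℕ}
    (hb : comp l (2 * k) = comp l' (2 * k)) (ha : comp l (2 * k + 1) = comp l' (2 * k + 1)) :
    l[k]? = l'[k]? := by
  simp only [comp_eq_map, (by omega : 2 * k / 2 = k), (by omega : (2 * k + 1) / 2 = k),
    (by omega : 2 * k % 2 = 0), (by omega : (2 * k + 1) % 2 = 1)] at hb ha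
  cases hl : l[k]? <;> cases hl' : l'[k]? <;> simp_all [Prod.ext_iff]

variable [LinearOrder X]

def XOmegaLtAt (τ σ : List (ℕ × X)) (s : ℕ) : Prop :=
  (∀ r, r < s → comp τ r = comp σ r) ∧
    ∃ a b, comp τ s = some a ∧ comp σ s = some b ∧ Sum.Lex (· < ·) (· < ·) a b

theorem xOmegaLt_iff {τ σ : List (ℕ × X)} :
    XOmegaLt τ σ ↔ (τ <+: σ ∧ τ ≠ σ) ∨ ∃ s, XOmegaLtAt τ σ s :=
  Iff.rfl

namespace XOmegaLtAt

variable {τ σ ρ : List (ℕ × X)} {s s' : ℕ}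

theorem lt_length_right (h : XOmegaLtAt τ σ s) : s < 2 * σ.length := by
  obtain ⟨-, -, b, -, hb, -⟩ := h
  exact lt_two_mul_length_of_comp_eq_some hb

theorem not_isPrefix (h : XOmegaLtAt τ σ s) : ¬ τ <+: σ := by
  intro hp
  obtain ⟨-, a, b, ha, hb, hab⟩ := h
  rw [hp.comp_eq (lt_two_mul_length_of_comp_eq_some ha), hb, Option.some.injEq] at ha
  exact irrefl _ (ha ▸ hab)

theorem trans_isPrefix (h : XOmegaLtAt τ σ s) (hp : σ <+: ρ) : XOmegaLtAt τ ρ s := by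
  have hs := h.lt_length_right
  obtain ⟨hagree, a, b, ha, hb, hab⟩ := h
  refine ⟨fun r hr => (hagree r hr).trans (hp.comp_eq (by omega)), a, b, ha, ?_, hab⟩
  rwa [← hp.comp_eq hs]

theorem trans (h : XOmegaLtAt τ σ s) (h' : XOmegaLtAt σ ρ s') :
    XOmegaLtAt τ ρ (min s s') := by
  obtain ⟨hagree, a, b, ha, hb, hab⟩ := h
  obtain ⟨hagree', a', b', ha', hb', hab'⟩ := h'
  have hbelow : ∀ r, r < min s s' → comp τ r = comp ρ r := fun r hr =>
    (hagree r (by omega)).trans (hagree' r (by omega))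
  rcases lt_trichotomy s s' with hlt | rfl | hlt
  · rw [min_eq_left hlt.le] at hbelow ⊢
    exact ⟨hbelow, a, b, ha, hagree' s hlt ▸ hb, hab⟩
  · rw [min_self] at hbelow ⊢
    rw [hb, Option.some.injEq] at ha'
    exact ⟨hbelow, a, b', ha, hb', _root_.trans hab (ha' ▸ hab')⟩
  · rw [min_eq_right hlt.le] at hbelow ⊢
    exact ⟨hbelow, a', b', (hagree s' hlt).trans ha', hb', hab'⟩

end XOmegaLtAt

theorem List.IsPrefix.xOmegaLt_of_xOmegaLtAt {τ σ ρ : List (ℕ × X)} {s : ℕ} (hp : τ <+: σ)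
    (h : XOmegaLtAt σ ρ s) : XOmegaLt τ ρ := by
  have hs := h.lt_length_right
  obtain ⟨hagree, a, b, ha, hb, hab⟩ := h
  rcases hτ : comp τ s with _ | c
  · -- `τ` ends before position `s`, below which `σ` and `ρ` agree
    have hτs : 2 * τ.length ≤ s := comp_eq_none_iff.1 hτ
    refine Or.inl ⟨List.prefix_iff_getElem?.2 fun k hk => ?_, fun hτρ => by subst hτρ; omega⟩
    rw [← getElem?_eq_of_comp_eq (hagree _ (by omega)) (hagree _ (by omega)),
      List.prefix_iff_getElem?.1 hp k hk]
  · have hτs := lt_two_mul_length_of_comp_eq_some hτ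
    rw [hp.comp_eq hτs, ha, Option.some.injEq] at hτ
    refine Or.inr ⟨s, fun r hr => (hp.comp_eq (by omega)).trans (hagree r hr), a, b, ?_, hb, hab⟩
    rw [hp.comp_eq hτs, ha]

theorem XOmegaLt.trans {τ σ ρ : List (ℕ × X)} (h : XOmegaLt τ σ) (h' : XOmegaLt σ ρ) :
    XOmegaLt τ ρ := by
  rcases xOmegaLt_iff.1 h with ⟨hp, hne⟩ | ⟨s, hs⟩
  · rcases xOmegaLt_iff.1 h' with ⟨hp', -⟩ | ⟨s', hs'⟩
    · exact Or.inl ⟨hp.trans hp', fun hτρ => hne <| hp.eq_of_length <|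
        le_antisymm hp.length_le (hτρ ▸ hp'.length_le)⟩
    · exact hp.xOmegaLt_of_xOmegaLtAt hs'
  · rcases xOmegaLt_iff.1 h' with ⟨hp', -⟩ | ⟨s', hs'⟩
    · exact Or.inr ⟨s, hs.trans_isPrefix hp'⟩
    · exact Or.inr ⟨_, hs.trans hs'⟩

theorem xOmegaLt_of_lt {σs : ℕ → List (ℕ × X)} (hdesc : ∀ i, XOmegaLt (σs (i + 1)) (σs i))
    {i j : ℕ} (hij : i < j) : XOmegaLt (σs j) (σs i) :=
  haveI : IsTrans _ fun τ σ : List (ℕ × X) => XOmegaLt σ τ := ⟨fun _ _ _ h h' => h'.trans h⟩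
  Nat.rel_of_forall_rel_succ_of_lt (fun τ σ => XOmegaLt σ τ) hdesc hij

section FirstDiff

variable {σs : ℕ → List (ℕ × X)} {i j : ℕ}

theorem firstDiff_eq_of_xOmegaLtAt {s : ℕ} (h : XOmegaLtAt (σs j) (σs i) s) :
    firstDiff σs i j = s := by
  rw [firstDiff, if_neg fun hp => h.not_isPrefix hp.1]
  obtain ⟨hagree, a, b, ha, hb, hab⟩ := h
  refine IsLeast.csInf_eq ⟨fun hba => ?_, fun r hr => not_lt.1 fun hrs => hr (hagree r hrs).symm⟩
  rw [ha, hb, Option.some.injEq] at hba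
  exact irrefl _ (hba ▸ hab)

theorem firstDiff_lt_of_xOmegaLt (h : XOmegaLt (σs j) (σs i)) :
    firstDiff σs i j < 2 * (σs i).length := by
  rcases xOmegaLt_iff.1 h with hp | ⟨s, hs⟩
  · rw [firstDiff, if_pos hp]
    have := hp.1.length_le
    have := mt hp.1.eq_of_length hp.2
    omega
  · rw [firstDiff_eq_of_xOmegaLtAt hs]
    exact hs.lt_length_right

theorem xOmegaLtAt_of_firstDiff_eq {c : ℕ} (hσ : ∀ i j, i < j → XOmegaLt (σs j) (σs i))
    (hc : ∀ i j, i < j → firstDiff σs i j = c) (hij : i < j) : XOmegaLtAt (σs j) (σs i) c := by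
  rcases xOmegaLt_iff.1 (hσ i j hij) with hp | ⟨s, hs⟩
  · have hlt := firstDiff_lt_of_xOmegaLt (hσ j (j + 1) j.lt_succ_self)
    rw [hc j (j + 1) j.lt_succ_self, ← hc i j hij, firstDiff, if_pos hp] at hlt
    exact absurd hlt (lt_irrefl _)
  · rwa [← hc i j hij, firstDiff_eq_of_xOmegaLtAt hs]

end FirstDiff

end XOmega

theorem stmt_3_general {X : Type*} [LinearOrder X] (σs : ℕ → List (ℕ × X))
    (hdesc : ∀ i, XOmegaLt (σs (i + 1)) (σs i))
    (h : ℕ → ℕ) (hmono : StrictMono h)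
    (cstar : ℕ) (hhom : ∀ i j, i < j → firstDiff σs (h i) (h j) = cstar) :
    cstar % 2 = 1 ∧
    (∀ i, cstar < 2 * (σs (h i)).length) ∧
    ∀ i j, i < j → ∀ a b : X,
      comp (σs (h i)) cstar = some (Sum.inr a) →
      comp (σs (h j)) cstar = some (Sum.inr b) → b < a := by
  have hat : ∀ i j, i < j → XOmegaLtAt (σs (h j)) (σs (h i)) cstar :=
    fun _ _ => xOmegaLtAt_of_firstDiff_eq (fun _ _ hij => xOmegaLt_of_lt hdesc (hmono hij)) hhom
  have hlen : ∀ i, cstar < 2 * (σs (h i)).length :=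
    fun i => (hat i (i + 1) i.lt_succ_self).lt_length_right
  choose g hg using fun i => exists_comp_eq_some (hlen i)
  have hlex : ∀ i j, i < j → Sum.Lex (· < ·) (· < ·) (g j) (g i) := by
    intro i j hij
    obtain ⟨-, a, b, ha, hb, hab⟩ := hat i j hij
    rw [hg, Option.some.injEq] at ha hb
    rwa [ha, hb]
  have hright := Sum.isRight_of_forall_lex_apply_succ wellFounded_lt
    fun n => hlex n (n + 1) n.lt_succ_self
  refine ⟨?_, hlen, fun i j hij a b ha hb => ?_⟩
  · obtain ⟨x, hx⟩ := Sum.isRight_iff.1 (hright 0)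
    exact mod_two_eq_one_of_comp_eq_inr (hx ▸ hg 0)
  · rw [hg, Option.some.injEq] at ha hb
    simpa [ha, hb] using hlex i j hij

/-- if `H = {h_0 < h_1 < …}` is infinite and the first-difference colouring `c`
is constant on pairs from `H` with value `c*`, then `c*` is odd, `c* < |σ_{h_i}|` for every `i`,
and the sequence of `t`-th `X`-coefficients (where `c* = 2t+1`, i.e. the components at
position `c*`) of the `σ_{h_i}` is strictly `<_X`-decreasing. -/
theorem stmt_3 {X : Type*} [LinearOrder X] (σs : ℕ → List (ℕ × X))
    (hvalid : ∀ i, IsExpSeq (σs i))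
    (hdesc : ∀ i, XOmegaLt (σs (i + 1)) (σs i))
    (h : ℕ → ℕ) (hmono : StrictMono h)
    (cstar : ℕ) (hhom : ∀ i j, i < j → firstDiff σs (h i) (h j) = cstar) :
    cstar % 2 = 1 ∧
    (∀ i, cstar < 2 * (σs (h i)).length) ∧
    ∀ i j, i < j → ∀ a b : X,
      comp (σs (h i)) cstar = some (Sum.inr a) →
      comp (σs (h j)) cstar = some (Sum.inr b) → b < a :=
  stmt_3_general σs hdesc h hmono cstar hhom
end

section
/- (Ordered Ramsey Theorem for ℕ.) Let P be a finite partial order and let c be a right-ordered colouring of pairs of natural numbers with values in P. Then there exists an infinite set H ⊆ ℕ that is c-homogeneous. -/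
/-- A colouring of pairs `{(x,y) : x < y}` with values in a partial order `P` is right-ordered
if `c(x,y) ≤ c(x,y')` whenever `x < y ≤ y'`. -/
def RightOrdered {P : Type*} [PartialOrder P] (c : ℕ → ℕ → P) : Prop :=
  ∀ x y y', x < y → y ≤ y' → c x y ≤ c x y'

/-- `H` is `c`-homogeneous: `c` takes a single constant value on all pairs from `H`. -/
def Homogeneous {P : Type*} (c : ℕ → ℕ → P) (H : Set ℕ) : Prop :=
  ∃ p, ∀ x ∈ H, ∀ y ∈ H, x < y → c x y = p

/-!
Each row `y ↦ c x y` is monotone into a poset without infinite ascending chains, so it is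
eventually constant, with some limit colour `f x`. As `P` is finite, infinitely many `x` share
the same limit colour `p`. Choosing such `x` greedily, each one beyond the points where the rows
of all earlier ones have stabilised, gives a set on which every pair has colour `p`.
-/

open Filter

theorem RightOrdered.exists_eventually_eq {P : Type*} [PartialOrder P] [WellFoundedGT P]
    {c : ℕ → ℕ → P} (hc : RightOrdered c) (x : ℕ) : ∃ p, ∀ᶠ y in atTop, c x y = p := by
  obtain ⟨n, hn⟩ := WellFoundedGT.monotone_chain_condition
    ⟨fun n ↦ c x (x + 1 + n), fun a b hab ↦ hc _ _ _ (by omega) (by omega)⟩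
  refine ⟨c x (x + 1 + n), eventually_atTop.2 ⟨x + 1 + n, fun y hy ↦ ?_⟩⟩
  obtain ⟨k, rfl⟩ := Nat.exists_eq_add_of_le hy
  simpa only [OrderHom.coe_mk, add_assoc] using (hn (n + k) (Nat.le_add_right n k)).symm

theorem Set.Infinite.exists_infinite_subset_forall_eventually {A : Set ℕ} (hA : A.Infinite)
    {Q : ℕ → ℕ → Prop} (hQ : ∀ x, ∀ᶠ y in atTop, Q x y) :
    ∃ H ⊆ A, H.Infinite ∧ ∀ x ∈ H, ∀ y ∈ H, x < y → Q x y := by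
  obtain ⟨f, hfA, hf⟩ := exists_seq_of_forall_finset_exists (· ∈ A) (fun x y ↦ x < y ∧ Q x y)
    fun s _ ↦ by
      have hlater : ∀ᶠ y in atTop, ∀ x ∈ s, x < y ∧ Q x y :=
        (eventually_all_finset s).2 fun x _ ↦ (eventually_gt_atTop x).and (hQ x)
      exact ((Nat.frequently_atTop_iff_infinite.2 hA).and_eventually hlater).exists
  have hmono : StrictMono f := fun m n hmn ↦ (hf m n hmn).1
  refine ⟨Set.range f, Set.range_subset_iff.2 hfA, Set.infinite_range_of_injective hmono.injective,
    ?_⟩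
  rintro _ ⟨m, rfl⟩ _ ⟨n, rfl⟩ hmn
  exact (hf m n (hmono.lt_iff_lt.1 hmn)).2

/-- Ordered Ramsey Theorem for ℕ: for every finite partial order `P` and every
right-ordered colouring `c` of pairs of natural numbers with values in `P`, there exists an
infinite `c`-homogeneous set `H ⊆ ℕ`. -/
theorem stmt_9 {P : Type*} [PartialOrder P] [Finite P]
    (c : ℕ → ℕ → P) (hc : RightOrdered c) :
    ∃ H : Set ℕ, H.Infinite ∧ Homogeneous c H := by
  choose f hf using hc.exists_eventually_eq
  obtain ⟨p, hp⟩ := Finite.exists_infinite_fiber f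
  obtain ⟨H, hHp, hH, hHf⟩ :=
    (Set.infinite_coe_iff.1 hp).exists_infinite_subset_forall_eventually hf
  exact ⟨H, hH, p, fun x hx y hy hxy ↦ (hHf x hx y hy hxy).trans (hHp hx)⟩
end

section
/- Fix n ∈ ℕ and a sequence (U_i)_{i≥0} of subsets of {1,…,n}, with the reset functions and the cycle-completion relation defined as in the context. Then for every i ≥ 0, the set V_i := ⋃_{reset_{U_i}(i) < h ≤ i} U_h completes a cycle at stage i. -/
-- `resetAux n U i A` is the integer `reset_A(i)` of the paper: `reset_A(0) = -1`, and
-- `reset_A(i+1) = i` if some `B ⊆ {1,…,n}` with `B ⊇ A` completes a cycle at stage `i`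
-- (i.e. `⋃_{reset_B(i) < h ≤ i} U_h = B`), and `reset_A(i+1) = reset_A(i)` otherwise.
open Classical in
noncomputable def resetAux (n : ℕ) (U : ℕ → Finset ℕ) : ℕ → Finset ℕ → ℤ
  | 0 => fun _ => -1
  | i + 1 => fun A =>
      if ∃ B, B ⊆ Finset.Icc 1 n ∧ A ⊆ B ∧
          ((Finset.range (i + 1)).filter
            (fun h : ℕ => resetAux n U i B < (h : ℤ))).biUnion U = B
      then (i : ℤ)
      else resetAux n U i A

/-- `B` completes a cycle at stage `i`: `⋃_{reset_B(i) < h ≤ i} U_h = B`. -/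
def CompletesCycle (n : ℕ) (U : ℕ → Finset ℕ) (i : ℕ) (B : Finset ℕ) : Prop :=
  ((Finset.range (i + 1)).filter (fun h : ℕ => resetAux n U i B < (h : ℤ))).biUnion U = B

/-- `V_i := ⋃_{reset_{U_i}(i) < h ≤ i} U_h`. -/
noncomputable def V (n : ℕ) (U : ℕ → Finset ℕ) (i : ℕ) : Finset ℕ :=
  ((Finset.range (i + 1)).filter (fun h : ℕ => resetAux n U i (U i) < (h : ℤ))).biUnion U

/-!
Since `U_i ⊆ V_i`, resetting is antitone in the set, so `reset_{V_i}(i) ≤ reset_{U_i}(i)`, and it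
suffices to prove the reverse inequality: then `V_i` is the union over its own cycle window. If
`r = reset_{U_i}(i) ≥ 0`, some cycle completed at stage `r` contains `U_i`; take a maximal such
cycle `C`. No superset of `C` completes a cycle at a stage in `(r, i)`, since `U_i` would then
be reset later than `r`. By induction on `r`, such stability forces every `U_h` with
`r < h < i` into `C`; hence `V_i ⊆ C`, and `V_i` is reset at stage `r` as well.
-/

/-- `⋃_{t < h ≤ g} U_h`. -/
def cycleUnion (U : ℕ → Finset ℕ) (t : ℤ) (g : ℕ) : Finset ℕ :=
  ((Finset.range (g + 1)).filter (fun h : ℕ => t < (h : ℤ))).biUnion U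

section CycleUnion

variable {U : ℕ → Finset ℕ} {t : ℤ} {g : ℕ}

theorem cycleUnion_subset_iff {X : Finset ℕ} :
    cycleUnion U t g ⊆ X ↔ ∀ h : ℕ, t < h → h ≤ g → U h ⊆ X := by
  simp only [cycleUnion, Finset.biUnion_subset, Finset.mem_filter, Finset.mem_range,
    Nat.lt_succ_iff]
  exact ⟨fun H h ht hg => H h ⟨hg, ht⟩, fun H h hh => H h hh.2 hh.1⟩

theorem subset_cycleUnion {h : ℕ} (ht : t < h) (hg : h ≤ g) : U h ⊆ cycleUnion U t g :=
  cycleUnion_subset_iff.mp le_rfl h ht hg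

theorem cycleUnion_mono_right {g' : ℕ} (hg : g ≤ g') : cycleUnion U t g ⊆ cycleUnion U t g' :=
  cycleUnion_subset_iff.mpr fun _ ht hh => subset_cycleUnion ht (hh.trans hg)

end CycleUnion

namespace CompletesCycle

variable {n : ℕ} {U : ℕ → Finset ℕ}

theorem cycleUnion_eq {i : ℕ} {B : Finset ℕ} (hB : CompletesCycle n U i B) :
    cycleUnion U (resetAux n U i B) i = B :=
  hB

theorem subset_Icc (hU : ∀ i, U i ⊆ Finset.Icc 1 n) {i : ℕ} {B : Finset ℕ}
    (hB : CompletesCycle n U i B) : B ⊆ Finset.Icc 1 n := by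
  rw [← hB.cycleUnion_eq, cycleUnion_subset_iff]
  exact fun h _ _ => hU h

theorem exists_le_maximal (hU : ∀ i, U i ⊆ Finset.Icc 1 n) {r : ℕ} {C₀ : Finset ℕ}
    (hC₀ : CompletesCycle n U r C₀) :
    ∃ C, C₀ ⊆ C ∧ Maximal (CompletesCycle n U r) C := by
  have hfin : {E | CompletesCycle n U r E}.Finite :=
    (Finset.Icc 1 n).powerset.finite_toSet.subset fun E hE =>
      Finset.mem_powerset.mpr (subset_Icc hU hE)
  exact hfin.exists_le_maximal hC₀

end CompletesCycle

section Reset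

variable {n : ℕ} {U : ℕ → Finset ℕ}

open Classical in
theorem resetAux_succ (i : ℕ) (A : Finset ℕ) :
    resetAux n U (i + 1) A =
      if ∃ B, B ⊆ Finset.Icc 1 n ∧ A ⊆ B ∧ CompletesCycle n U i B then (i : ℤ)
      else resetAux n U i A :=
  rfl

theorem resetAux_eq_neg_one_or_exists :
    ∀ (i : ℕ) (A : Finset ℕ), resetAux n U i A = -1 ∨
      ∃ t : ℕ, resetAux n U i A = t ∧ t < i ∧
        ∃ B, B ⊆ Finset.Icc 1 n ∧ A ⊆ B ∧ CompletesCycle n U t B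
  | 0, _ => Or.inl rfl
  | i + 1, A => by
      rw [resetAux_succ]
      split_ifs with h
      · exact Or.inr ⟨i, rfl, i.lt_succ_self, h⟩
      · rcases resetAux_eq_neg_one_or_exists i A with h' | ⟨t, ht, hti, hB⟩
        · exact Or.inl h'
        · exact Or.inr ⟨t, ht, hti.trans i.lt_succ_self, hB⟩

theorem neg_one_le_resetAux (i : ℕ) (A : Finset ℕ) : -1 ≤ resetAux n U i A := by
  rcases resetAux_eq_neg_one_or_exists (n := n) (U := U) i A with h | ⟨t, h, -⟩ <;> omega

theorem resetAux_lt (i : ℕ) (A : Finset ℕ) : resetAux n U i A < i := by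
  rcases resetAux_eq_neg_one_or_exists (n := n) (U := U) i A with h | ⟨t, h, hti, -⟩ <;> omega

theorem resetAux_le_of_forall_completesCycle {i : ℕ} {A : Finset ℕ} {q : ℤ} (hq : -1 ≤ q)
    (H : ∀ t E, t < i → A ⊆ E → CompletesCycle n U t E → (t : ℤ) ≤ q) :
    resetAux n U i A ≤ q := by
  rcases resetAux_eq_neg_one_or_exists i A with h | ⟨t, h, hti, E, -, hAE, hE⟩
  · exact h ▸ hq
  · exact h ▸ H t E hti hAE hE

theorem resetAux_monotone (A : Finset ℕ) : Monotone fun i => resetAux n U i A :=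
  monotone_nat_of_le_succ fun i => by
    rw [resetAux_succ]
    split_ifs
    exacts [(resetAux_lt i A).le, le_rfl]

theorem resetAux_le_of_subset {A A' : Finset ℕ} (hAA' : A ⊆ A') :
    ∀ i, resetAux n U i A' ≤ resetAux n U i A
  | 0 => le_rfl
  | i + 1 => by
      rw [resetAux_succ, resetAux_succ]
      by_cases h : ∃ B, B ⊆ Finset.Icc 1 n ∧ A' ⊆ B ∧ CompletesCycle n U i B
      · obtain ⟨B, hB, hA'B, hcc⟩ := h
        rw [if_pos ⟨B, hB, hA'B, hcc⟩, if_pos ⟨B, hB, hAA'.trans hA'B, hcc⟩]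
      · rw [if_neg h]
        split_ifs
        exacts [(resetAux_lt i A').le, resetAux_le_of_subset hAA' i]

theorem le_resetAux_of_completesCycle (hU : ∀ i, U i ⊆ Finset.Icc 1 n) {A B : Finset ℕ}
    {j i : ℕ} (hAB : A ⊆ B) (hB : CompletesCycle n U j B) (hji : j < i) :
    (j : ℤ) ≤ resetAux n U i A := by
  have hreset : resetAux n U (j + 1) A = j := by
    rw [resetAux_succ, if_pos ⟨B, hB.subset_Icc hU, hAB, hB⟩]
  exact hreset ▸ resetAux_monotone A hji

end Reset

def CycleStable (n : ℕ) (U : ℕ → Finset ℕ) (C : Finset ℕ) (r g : ℕ) : Prop :=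
  ∀ j E, r ≤ j → j ≤ g → C ⊆ E → CompletesCycle n U j E → E = C

namespace CycleStable

variable {n : ℕ} {U : ℕ → Finset ℕ} {C : Finset ℕ} {r g : ℕ}

theorem mono {g' : ℕ} (hC : CycleStable n U C r g) (hg : g' ≤ g) : CycleStable n U C r g' :=
  fun j E hrj hjg' => hC j E hrj (hjg'.trans hg)

/-- Superset cycles at stages in `(t, r)` would push `reset_C(r)` above `t`. -/
theorem of_resetAux_eq (hU : ∀ i, U i ⊆ Finset.Icc 1 n) (hC : CycleStable n U C r g)
    {t : ℕ} (ht : resetAux n U r C = t) {Cs : Finset ℕ} (hCCs : C ⊆ Cs)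
    (hCs : Maximal (CompletesCycle n U t) Cs) : CycleStable n U Cs t g := by
  intro j E htj hjg hCsE hE
  rcases htj.eq_or_lt with rfl | htj
  · exact hCs.eq_of_ge hE hCsE
  rcases lt_or_ge j r with hjr | hrj
  · have := le_resetAux_of_completesCycle hU (hCCs.trans hCsE) hE hjr
    omega
  · have hEC : E = C := hC j E hrj hjg (hCCs.trans hCsE) hE
    subst hEC
    exact hCsE.antisymm' hCCs

end CycleStable

section Stability

variable {n : ℕ} {U : ℕ → Finset ℕ}

theorem completesCycle_union {r g : ℕ} {C : Finset ℕ} (hC : CompletesCycle n U r C)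
    (hrg : r < g) (hbelow : ∀ h, r < h → h < g → U h ⊆ C)
    (hreset : resetAux n U g (C ∪ U g) = resetAux n U r C) :
    CompletesCycle n U g (C ∪ U g) := by
  have hpr := resetAux_lt (n := n) (U := U) r C
  show cycleUnion U _ g = _
  rw [hreset]
  apply Finset.Subset.antisymm
  · refine cycleUnion_subset_iff.mpr fun h hph hhg => ?_
    rcases le_or_gt h r with hhr | hrh
    · have hUh : U h ⊆ cycleUnion U (resetAux n U r C) r := subset_cycleUnion hph hhr
      exact (hC.cycleUnion_eq ▸ hUh).trans Finset.subset_union_left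
    rcases hhg.lt_or_eq with hhg | rfl
    · exact (hbelow h hrh hhg).trans Finset.subset_union_left
    · exact Finset.subset_union_right
  · refine Finset.union_subset ?_ (subset_cycleUnion (by omega) le_rfl)
    have hCr : C ⊆ cycleUnion U (resetAux n U r C) r := hC.cycleUnion_eq.ge
    exact hCr.trans (cycleUnion_mono_right hrg.le)

/-- If `U g ⊄ C`, then `C ∪ U g` has the same reset time at stage `g` as `C`
at stage `r`, hence completes a cycle at stage `g`, contradicting stability. The lower bound on
that reset time comes from applying the lemma to a maximal cycle at the earlier stage
`reset_C(r)`. -/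
theorem subset_of_cycleStable (hU : ∀ i, U i ⊆ Finset.Icc 1 n) {r g : ℕ} {C : Finset ℕ}
    (hC : CompletesCycle n U r C) (hst : CycleStable n U C r g) (hrg : r < g) : U g ⊆ C := by
  induction r using Nat.strong_induction_on generalizing g C with | _ r ihr =>
  induction g using Nat.strong_induction_on with | _ g ihg =>
  have hbelow : ∀ h, r < h → h < g → U h ⊆ C := fun h hrh hhg =>
    ihg h hhg (hst.mono hhg.le) hrh
  by_contra hUg
  have hFC : ¬ C ∪ U g ⊆ C := fun h => hUg (Finset.subset_union_right.trans h)
  have hle : resetAux n U g (C ∪ U g) ≤ resetAux n U r C := by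
    refine resetAux_le_of_forall_completesCycle (neg_one_le_resetAux r C)
      fun t E htg hFE hE => ?_
    have hCE : C ⊆ E := Finset.subset_union_left.trans hFE
    rcases lt_or_ge t r with htr | hrt
    · exact le_resetAux_of_completesCycle hU hCE hE htr
    · exact absurd (hst t E hrt htg.le hCE hE ▸ hFE) hFC
  have hge : resetAux n U r C ≤ resetAux n U g (C ∪ U g) := by
    rcases resetAux_eq_neg_one_or_exists r C with hp | ⟨t, hp, htr, C₀, -, hCC₀, hC₀⟩
    · exact hp ▸ neg_one_le_resetAux g _
    obtain ⟨Cs, hC₀Cs, hCs⟩ := hC₀.exists_le_maximal hU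
    have hCCs : C ⊆ Cs := hCC₀.trans hC₀Cs
    have hUgCs : U g ⊆ Cs :=
      ihr t htr hCs.prop (hst.of_resetAux_eq hU hp hCCs hCs) (htr.trans hrg)
    exact hp ▸ le_resetAux_of_completesCycle hU (Finset.union_subset hCCs hUgCs) hCs.prop
      (htr.trans hrg)
  exact hFC (hst g _ hrg.le le_rfl Finset.subset_union_left
    (completesCycle_union hC hrg hbelow (hle.antisymm hge))).le

end Stability

/-- for every `i`, the set `V_i = ⋃_{reset_{U_i}(i) < h ≤ i} U_h` completes a
cycle at stage `i`. -/
theorem stmt_10 (n : ℕ) (U : ℕ → Finset ℕ) (hU : ∀ i, U i ⊆ Finset.Icc 1 n) :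
    ∀ i, CompletesCycle n U i (V n U i) := by
  intro i
  have hV : V n U i = cycleUnion U (resetAux n U i (U i)) i := rfl
  have hUV : U i ⊆ V n U i := hV ▸ subset_cycleUnion (resetAux_lt i (U i)) le_rfl
  suffices hge : resetAux n U i (U i) ≤ resetAux n U i (V n U i) by
    show cycleUnion U _ i = _
    rw [(resetAux_le_of_subset hUV i).antisymm hge, hV]
  rcases resetAux_eq_neg_one_or_exists i (U i) with hr | ⟨r, hr, hri, C₀, -, hUC₀, hC₀⟩
  · exact hr ▸ neg_one_le_resetAux i _
  obtain ⟨C, hC₀C, hC⟩ := hC₀.exists_le_maximal hU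
  have hUC : U i ⊆ C := hUC₀.trans hC₀C
  have hst : ∀ g < i, CycleStable n U C r g := fun g hgi j E hrj hjg hCE hE => by
    rcases hrj.eq_or_lt with rfl | hrj
    · exact hC.eq_of_ge hE hCE
    · have := le_resetAux_of_completesCycle hU (hUC.trans hCE) hE (hjg.trans_lt hgi)
      omega
  have hVC : V n U i ⊆ C := by
    rw [hV, hr, cycleUnion_subset_iff]
    intro h hrh hhi
    rcases hhi.lt_or_eq with hhi | rfl
    · exact subset_of_cycleStable hU hC.prop (hst h hhi) (by exact_mod_cast hrh)
    · exact hUC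
  exact hr ▸ le_resetAux_of_completesCycle hU hVC hC.prop hri
end
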